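/- Suppose X and Y are proper Gromov hyperbolic geodesic spaces with basepoints a and b whose boundaries are equipped with visual metrics, g : ∂X → ∂Y is a Hölder map, and X is visual. Then there is M > 0 such that every radial extension f : X → Y of g with parameter A ≤ M is a radial function (in particular, every such f is large scale Lipschitz). -/

import Mathlib

open Filter Metric Set

noncomputable section

namespace Gromov

variable {X : Type*} [MetricSpace X] {Y : Type*} [MetricSpace Y]

/-- The Gromov product `(x,y)_a = (d(x,a)+d(y,a)-d(x,y))/2`. -/
def gp (a x y : X) : ℝ := (dist x a + dist y a - dist x y) / 2

/-- Gromov `δ`-hyperbolicity via the `δ/4`-inequality. -/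
def IsDeltaHyperbolic (X : Type*) [MetricSpace X] (δ : ℝ) : Prop :=
  ∀ x y z w : X, gp w x y ≥ min (gp w x z) (gp w z y) - δ / 4

/-- `γ` is a geodesic starting at `x`, parametrized by arclength on `[0, M]`. -/
def IsGeodesicOn (γ : ℝ → X) (x : X) (M : ℝ) : Prop :=
  γ 0 = x ∧ ∀ s ∈ Icc (0:ℝ) M, ∀ t ∈ Icc (0:ℝ) M, dist (γ s) (γ t) = |s - t|

/-- Every two points are joined by a geodesic. -/
def IsGeodesicSpace (X : Type*) [MetricSpace X] : Prop :=
  ∀ x y : X, ∃ γ : ℝ → X, IsGeodesicOn γ x (dist x y) ∧ γ (dist x y) = y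

/-- An infinite geodesic ray emanating from `x`. -/
def IsRay (γ : ℝ → X) (x : X) : Prop :=
  γ 0 = x ∧ ∀ s ∈ Ici (0:ℝ), ∀ t ∈ Ici (0:ℝ), dist (γ s) (γ t) = |s - t|

/-- `f` is `(l, μ)`-large scale Lipschitz. -/
def IsLSL (f : X → Y) (l μ : ℝ) : Prop :=
  ∀ x y : X, dist (f x) (f y) ≤ l * dist x y + μ

/-- `f` is large scale Lipschitz. -/
def LSL (f : X → Y) : Prop := ∃ l μ : ℝ, 0 < l ∧ 0 < μ ∧ IsLSL f l μ

/-- The `(l2, μ2)`-radial lower bound condition with respect to `x₀`: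
on every finite geodesic emanating from `x₀`, `l2·d(x,y) - μ2 ≤ d(f(x),f(y))`. -/
def IsRadialWith (f : X → Y) (x₀ : X) (l2 μ2 : ℝ) : Prop :=
  ∀ M, 0 ≤ M → ∀ γ : ℝ → X, IsGeodesicOn γ x₀ M →
    ∀ s ∈ Icc (0:ℝ) M, ∀ t ∈ Icc (0:ℝ) M,
      l2 * dist (γ s) (γ t) - μ2 ≤ dist (f (γ s)) (f (γ t))

/-- `f` is a radial function with respect to `x₀`. -/
def Radial (f : X → Y) (x₀ : X) : Prop :=
  LSL f ∧ ∃ l2 μ2 : ℝ, 0 < l2 ∧ 0 < μ2 ∧ IsRadialWith f x₀ l2 μ2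

/-- `f` is visual: for some basepoint `a`, `(x_n,y_n)_a → ∞` implies
`(f(x_n),f(y_n))_{f(a)} → ∞`. -/
def VisualFn (f : X → Y) : Prop :=
  ∃ a : X, ∀ x y : ℕ → X,
    Tendsto (fun n => gp a (x n) (y n)) atTop atTop →
    Tendsto (fun n => gp (f a) (f (x n)) (f (y n))) atTop atTop

/-- `liminf_{i,j→∞} (x_i,x_j)_a = ∞`: the sequence converges to infinity. -/
def ConvSeq (a : X) (x : ℕ → X) : Prop :=
  Tendsto (fun p : ℕ × ℕ => gp a (x p.1) (x p.2)) atTop atTop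

/-- `liminf_{i,j→∞} (x_i,y_j)_a = ∞`: the two sequences are equivalent. -/
def SeqEquiv (a : X) (x y : ℕ → X) : Prop :=
  Tendsto (fun p : ℕ × ℕ => gp a (x p.1) (y p.2)) atTop atTop

def BSeq (a : X) : Type _ := {x : ℕ → X // ConvSeq a x}

/-- The sequential boundary `∂X` with basepoint `a`. -/
def Boundary (a : X) : Type _ := Quot (fun x y : BSeq a => SeqEquiv a x.1 y.1)

/-- The boundary point represented by a sequence. -/
def bpt (a : X) (x : ℕ → X) (hx : ConvSeq a x) : Boundary a :=
  Quot.mk _ ⟨x, hx⟩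

/-- `liminf_{i,j→∞} (x_i,y_j)_a` as an extended real. -/
def gpSeqs (a : X) (x y : ℕ → X) : EReal :=
  liminf (fun p : ℕ × ℕ => ((gp a (x p.1) (y p.2)) : EReal)) atTop

/-- The basic neighborhood `U(p,r)` in the sequential boundary. -/
def U (a : X) (p : Boundary a) (r : ℝ) : Set (Boundary a) :=
  {q | ∃ (x y : ℕ → X) (hx : ConvSeq a x) (hy : ConvSeq a y),
    bpt a x hx = p ∧ bpt a y hy = q ∧ (r : EReal) ≤ gpSeqs a x y}

instance (a : X) : TopologicalSpace (Boundary a) :=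
  TopologicalSpace.generateFrom {s | ∃ p r, 0 < r ∧ s = U a p r}

/-- The union `X ∪ ∂X`. -/
def Comp (a : X) : Type _ := X ⊕ Boundary a

def Comp.inl {a : X} (x : X) : Comp a := Sum.inl x
def Comp.inr {a : X} (p : Boundary a) : Comp a := Sum.inr p

/-- The extension of `U(p,r)` to `X ∪ ∂X`. -/
def UFull (a : X) (p : Boundary a) (r : ℝ) : Set (Comp a) :=
  {z : X ⊕ Boundary a | Sum.elim
    (fun x : X => ∃ (s : ℕ → X) (hs : ConvSeq a s), bpt a s hs = p ∧
      (r : EReal) ≤ liminf (fun i : ℕ => ((gp a (s i) x) : EReal)) atTop)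
    (fun q : Boundary a => q ∈ U a p r) z}

instance (a : X) : TopologicalSpace (Comp a) :=
  TopologicalSpace.generateFrom
    ({s | ∃ u : Set X, IsOpen u ∧ s = Comp.inl '' u} ∪
     {s | ∃ p r, 0 < r ∧ s = UFull a p r})

/-- The Gromov product of two boundary points:
`(p,q)_a = inf liminf_{i→∞} (x_i,y_i)_a` over representatives. -/
def gpBoundary (a : X) (p q : Boundary a) : EReal :=
  sInf {e : EReal | ∃ (x y : ℕ → X) (hx : ConvSeq a x) (hy : ConvSeq a y),
    bpt a x hx = p ∧ bpt a y hy = q ∧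
    e = liminf (fun i : ℕ => ((gp a (x i) (y i)) : EReal)) atTop}

/-- `K^{-e}` for an extended real exponent `e` (with `K^{-∞} = 0`). -/
def negPow (K : ℝ) (e : EReal) : ℝ :=
  if e = ⊤ then 0 else if e = ⊥ then 0 else Real.rpow K (-(e.toReal))

/-- `d` is a visual metric on `∂X` with parameters `K, C > 1`. -/
def IsVisualMetric (a : X) (d : Boundary a → Boundary a → ℝ) (K C : ℝ) : Prop :=
  1 < K ∧ 1 < C ∧ ∀ p q : Boundary a,
    negPow K (gpBoundary a p q) / C ≤ d p q ∧ d p q ≤ C * negPow K (gpBoundary a p q)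

/-- A map between sets with distinguished distance functions is Hölder. -/
def IsHolder {A B : Type*} (dA : A → A → ℝ) (dB : B → B → ℝ) (g : A → B) : Prop :=
  ∃ L α : ℝ, 0 < L ∧ 0 < α ∧ ∀ p q : A, dB (g p) (g q) ≤ L * Real.rpow (dA p q) α

/-- `(ξ₁,ξ₂)_a = liminf_{t→∞} (ξ₁(t),ξ₂(t))_a` for rays. -/
def gpRays (a : X) (ξ₁ ξ₂ : ℝ → X) : EReal :=
  liminf (fun t : ℝ => ((gp a (ξ₁ t) (ξ₂ t)) : EReal)) atTop

/-- The geodesic ray `ξ` represents the boundary point `p`. -/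
def RayRepresents (a : X) (ξ : ℝ → X) (p : Boundary a) : Prop :=
  ∃ h : ConvSeq a (fun n : ℕ => ξ n), bpt a (fun n : ℕ => ξ n) h = p

/-- `(x,ξ)_a = liminf_{n→∞} (x,ξ(n))_a`. -/
def gpPointRay (a x : X) (ξ : ℝ → X) : ℝ :=
  liminf (fun n : ℕ => gp a x (ξ n)) atTop

/-- `X` is a visual hyperbolic space with basepoint `a` and constant `D`. -/
def IsVisualSpace (a : X) (D : ℝ) : Prop :=
  ∀ x : X, ∃ ξ : ℝ → X, IsRay ξ a ∧ gpPointRay a x ξ > dist x a - D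

/-- A maximal finite geodesic from `a`: it admits no proper geodesic extension. -/
def MaximalGeodesic (ζ : ℝ → X) (a : X) (M : ℝ) : Prop :=
  IsGeodesicOn ζ a M ∧
    ¬ ∃ (M' : ℝ) (ζ' : ℝ → X), M < M' ∧ IsGeodesicOn ζ' a M' ∧
      ∀ t ∈ Icc (0:ℝ) M, ζ' t = ζ t

/-- `f : X → Y` is a radial extension with parameter `A` of `g : ∂X → ∂Y`
(`D` being the visuality constant of `X`). -/
def IsRadialExtension (a : X) (b : Y) (g : Boundary a → Boundary b)
    (A D : ℝ) (f : X → Y) : Prop :=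
  f a = b ∧
  ∀ x : X, x ≠ a →
    ((∃ (ξ : ℝ → X) (t : ℝ), IsRay ξ a ∧ 0 ≤ t ∧ ξ t = x) →
      ∃ (ξ : ℝ → X) (t : ℝ) (η : ℝ → Y), IsRay ξ a ∧ 0 ≤ t ∧ ξ t = x ∧ IsRay η b ∧
        (∃ p : Boundary a, RayRepresents a ξ p ∧ RayRepresents b η (g p)) ∧
        f x = η (A * t)) ∧
    ((¬ ∃ (ξ : ℝ → X) (t : ℝ), IsRay ξ a ∧ 0 ≤ t ∧ ξ t = x) →
      ∃ (M t : ℝ) (ζ ξ : ℝ → X) (η : ℝ → Y),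
        MaximalGeodesic ζ a M ∧ t ∈ Icc (0:ℝ) M ∧ ζ t = x ∧
        IsRay ξ a ∧ gpPointRay a (ζ M) ξ > dist (ζ M) a - D ∧ IsRay η b ∧
        (∃ p : Boundary a, RayRepresents a ξ p ∧ RayRepresents b η (g p)) ∧
        f x = η (A * t))

/-- `f` is coarsely surjective. -/
def CoarselySurjective (f : X → Y) : Prop :=
  ∃ S : ℝ, 0 < S ∧ ∀ y : Y, ∃ x : X, dist y (f x) ≤ S

/-- `f` is bornologous (coarse). -/
def Bornologous (f : X → Y) : Prop :=
  ∀ R : ℝ, 0 < R → ∃ S : ℝ, 0 < S ∧ ∀ x x' : X, dist x x' ≤ R → dist (f x) (f x') ≤ S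

/-- `f` is a coarse embedding. -/
def CoarseEmbedding (f : X → Y) : Prop :=
  Bornologous f ∧
    ∀ R : ℝ, 0 < R → ∃ S : ℝ, 0 < S ∧ ∀ x x' : X, dist (f x) (f x') ≤ R → dist x x' ≤ S

/-- `f` is coarsely `n`-to-1. -/
def CoarselyNto1 (f : X → Y) (n : ℕ) : Prop :=
  ∀ R : ℝ, 0 < R → ∃ S : ℝ, 0 < S ∧ ∀ A : Set Y, EMetric.diam A < ENNReal.ofReal R →
    ∃ B : Fin n → Set X, (f ⁻¹' A = ⋃ i, B i) ∧
      ∀ i, EMetric.diam (B i) < ENNReal.ofReal S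

/-- `g : ∂X → ∂Y` is the boundary map induced by `f`, i.e. `g [(x_n)] = [(f(x_n))]`. -/
def InducedBoundaryMap (a : X) (f : X → Y) (g : Boundary a → Boundary (f a)) : Prop :=
  ∀ (x : ℕ → X) (hx : ConvSeq a x) (hfx : ConvSeq (f a) (f ∘ x)),
    g (bpt a x hx) = bpt (f a) (f ∘ x) hfx

/-- `g` is (at most) `n`-to-1. -/
def NTo1 {A B : Type*} (g : A → B) (n : ℕ) : Prop :=
  ∀ b : B, ∃ s : Finset A, s.card ≤ n ∧ ∀ a : A, g a = b → a ∈ s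

/-- Covering dimension at most `n`: every open cover admits an open refinement
of multiplicity at most `n+1`. -/
def CovDimLE (Z : Type*) [TopologicalSpace Z] (n : ℕ) : Prop :=
  ∀ 𝒰 : Set (Set Z), (∀ u ∈ 𝒰, IsOpen u) → ⋃₀ 𝒰 = univ →
    ∃ 𝒱 : Set (Set Z), (∀ v ∈ 𝒱, IsOpen v) ∧ ⋃₀ 𝒱 = univ ∧
      (∀ v ∈ 𝒱, ∃ u ∈ 𝒰, v ⊆ u) ∧
      ∀ z : Z, {v ∈ 𝒱 | z ∈ v}.Finite ∧ {v ∈ 𝒱 | z ∈ v}.ncard ≤ n + 1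

/-- `c_{f,n}(r)`: the supremum of numbers `B` such that there exist `n+1` points
with mutual Gromov products `< r` whose images have mutual Gromov products `≥ B`. -/
def cfn (a : X) (b : Y) (f : X → Y) (n : ℕ) (r : ℝ) : EReal :=
  sSup {e : EReal | ∃ (B : ℝ) (x : Fin (n + 1) → X), e = (B : EReal) ∧
    (∀ i j, i ≠ j → gp a (x i) (x j) < r) ∧
    (∀ i j, i ≠ j → B ≤ gp b (f (x i)) (f (x j)))}

/-!
Hölder continuity of `g` between visual metrics amounts to a linear lower bound
`(g p, g q)_b ≥ β (p,q)_a - c` on Gromov products of boundary points. A radial extension `f`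
sends `x` to distance `A·d(x,a)` from `b` along a ray representing the image of a boundary point
that `x` shadows up to `D`; so for `A ≤ β` hyperbolicity gives `(f x, f y)_b ≥ A (x,y)_a - c'`.
Since also `d(f x, b) = A d(x, a)`, this yields `d(f x, f y) ≤ A d(x,y) + 2c'`, while along a
geodesic from `a` the reverse triangle inequality at `b` gives `d(f x, f y) ≥ A d(x,y)`.
-/

section GromovProduct

variable {δ : ℝ}

lemma gp_nonneg (a x y : X) : 0 ≤ gp a x y := by
  have := dist_triangle_right x y a
  unfold gp; linarith

lemma gp_comm (a x y : X) : gp a x y = gp a y x := by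
  unfold gp; rw [dist_comm x y]; ring

lemma gp_le_dist_left (a x y : X) : gp a x y ≤ dist x a := by
  have := dist_triangle_left y a x
  unfold gp; linarith

lemma gp_basepoint_left (a y : X) : gp a a y = 0 := by
  unfold gp; rw [dist_self, dist_comm]; ring

lemma gp_eq_min_of_dist_eq {a x y : X} {s t : ℝ}
    (hx : dist x a = s) (hy : dist y a = t) (hxy : dist x y = |s - t|) :
    gp a x y = min s t := by
  unfold gp
  rw [hx, hy, hxy]
  rcases le_total s t with h | h
  · rw [abs_of_nonpos (by linarith), min_eq_left h]; ring
  · rw [abs_of_nonneg (by linarith), min_eq_right h]; ring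

lemma IsDeltaHyperbolic.nonneg (hX : IsDeltaHyperbolic X δ) (a : X) : 0 ≤ δ := by
  have := hX a a a a
  simp only [gp_basepoint_left, min_self] at this
  linarith

lemma IsDeltaHyperbolic.min_three_sub_le (hX : IsDeltaHyperbolic X δ) (w x u v y : X) :
    min (gp w x u) (min (gp w u v) (gp w v y)) - δ / 2 ≤ gp w x y := by
  set m := min (gp w x u) (min (gp w u v) (gp w v y))
  have hδ := hX.nonneg w
  have huy : m - δ / 4 ≤ gp w u y :=
    le_trans (sub_le_sub_right (min_le_right _ _) _) (hX u y v w)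
  have hxu : m - δ / 4 ≤ gp w x u := by
    linarith [min_le_left (gp w x u) (min (gp w u v) (gp w v y))]
  linarith [hX x y u w, le_min hxu huy]

end GromovProduct

section Geodesics

variable {δ : ℝ}

lemma IsRay.dist_origin {ξ : ℝ → X} {a : X} (hξ : IsRay ξ a) {t : ℝ} (ht : 0 ≤ t) :
    dist (ξ t) a = t := by
  rw [← hξ.1, hξ.2 t ht 0 self_mem_Ici, sub_zero, abs_of_nonneg ht]

lemma IsRay.gp_eq_min {ξ : ℝ → X} {a : X} (hξ : IsRay ξ a) {s t : ℝ} (hs : 0 ≤ s) (ht : 0 ≤ t) :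
    gp a (ξ s) (ξ t) = min s t :=
  gp_eq_min_of_dist_eq (hξ.dist_origin hs) (hξ.dist_origin ht) (hξ.2 s hs t ht)

lemma IsGeodesicOn.dist_origin {γ : ℝ → X} {a : X} {M : ℝ} (hγ : IsGeodesicOn γ a M)
    {t : ℝ} (ht : t ∈ Icc 0 M) : dist (γ t) a = t := by
  rw [← hγ.1, hγ.2 t ht 0 ⟨le_rfl, ht.1.trans ht.2⟩, sub_zero, abs_of_nonneg ht.1]

lemma IsGeodesicOn.gp_eq_min {γ : ℝ → X} {a : X} {M : ℝ} (hγ : IsGeodesicOn γ a M)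
    {s t : ℝ} (hs : s ∈ Icc 0 M) (ht : t ∈ Icc 0 M) : gp a (γ s) (γ t) = min s t :=
  gp_eq_min_of_dist_eq (hγ.dist_origin hs) (hγ.dist_origin ht) (hγ.2 s hs t ht)

lemma IsRay.eventually_gp_eq {ξ : ℝ → X} {a : X} (hξ : IsRay ξ a) {t : ℝ} (ht : 0 ≤ t) :
    ∀ᶠ n : ℕ in atTop, gp a (ξ t) (ξ n) = t := by
  filter_upwards [eventually_ge_atTop ⌈t⌉₊] with n hn
  rw [hξ.gp_eq_min ht n.cast_nonneg, min_eq_left ((Nat.le_ceil t).trans (by exact_mod_cast hn))]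

lemma IsGeodesicOn.eventually_le_gp (hX : IsDeltaHyperbolic X δ) {ζ ξ : ℝ → X} {a : X}
    {M D : ℝ} (hD : 0 ≤ D) (hζ : IsGeodesicOn ζ a M) (hξ : M - D < gpPointRay a (ζ M) ξ)
    {t : ℝ} (ht : t ∈ Icc 0 M) :
    ∀ᶠ n : ℕ in atTop, t - D - δ / 4 ≤ gp a (ζ t) (ξ n) := by
  have hM : M ∈ Icc 0 M := ⟨ht.1.trans ht.2, le_rfl⟩
  have hbdd : IsBoundedUnder (· ≥ ·) atTop fun n : ℕ => gp a (ζ M) (ξ n) :=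
    isBoundedUnder_of ⟨0, fun n => gp_nonneg a _ _⟩
  filter_upwards [eventually_lt_of_lt_liminf hξ hbdd] with n hn
  have := hX (ζ t) (ξ n) (ζ M) a
  rw [hζ.gp_eq_min ht hM, min_eq_left ht.2] at this
  linarith [le_min (show t - D ≤ t by linarith) (show t - D ≤ M - D by linarith [ht.2]),
    min_le_min_left t hn.le]

lemma IsRay.min_sub_le_gp (hY : IsDeltaHyperbolic Y δ) {b : Y} {η₁ η₂ : ℝ → Y}
    (h₁ : IsRay η₁ b) (h₂ : IsRay η₂ b) {s t r : ℝ} (hs : 0 ≤ s) (ht : 0 ≤ t)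
    (hr : (r : EReal) ≤ liminf (fun n : ℕ => (gp b (η₁ n) (η₂ n) : EReal)) atTop) :
    min (min s t) r - δ / 2 ≤ gp b (η₁ s) (η₂ t) := by
  refine le_of_forall_pos_le_add fun ε hε => ?_
  have hlt : ((r - ε : ℝ) : EReal) < liminf (fun n : ℕ => (gp b (η₁ n) (η₂ n) : EReal)) atTop :=
    lt_of_lt_of_le (by exact_mod_cast sub_lt_self r hε) hr
  obtain ⟨n, hn, hsn, htn⟩ := ((eventually_lt_of_lt_liminf hlt).and
    ((h₁.eventually_gp_eq hs).and ((h₂.eventually_gp_eq ht)))).exists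
  have hn : r - ε < gp b (η₁ n) (η₂ n) := by exact_mod_cast hn
  have := hY.min_three_sub_le b (η₁ s) (η₁ n) (η₂ n) (η₂ t)
  rw [hsn, gp_comm b (η₂ n) (η₂ t), htn] at this
  have : min (min s t) r - ε ≤ min s (min (gp b (η₁ n) (η₂ n)) t) := by
    refine le_min ?_ (le_min ?_ ?_)
    · linarith [min_le_left (min s t) r, min_le_left s t]
    · linarith [min_le_right (min s t) r]
    · linarith [min_le_left (min s t) r, min_le_right s t]
  linarith

end Geodesics

section BoundaryGromovProduct

variable {δ : ℝ}

lemma SeqEquiv.symm {a : X} {x y : ℕ → X} (h : SeqEquiv a x y) : SeqEquiv a y x := by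
  unfold SeqEquiv at *
  rw [← prod_atTop_atTop_eq] at *
  exact (h.comp tendsto_prod_swap).congr fun p => gp_comm a _ _

lemma SeqEquiv.trans (hX : IsDeltaHyperbolic X δ) {a : X} {x y z : ℕ → X}
    (hxy : SeqEquiv a x y) (hyz : SeqEquiv a y z) : SeqEquiv a x z := by
  refine tendsto_atTop.2 fun C => ?_
  obtain ⟨N, hN⟩ := eventually_atTop.1 (tendsto_atTop.1 hxy (C + δ / 4))
  obtain ⟨M, hM⟩ := eventually_atTop.1 (tendsto_atTop.1 hyz (C + δ / 4))
  refine eventually_atTop.2 ⟨(N.1, M.2), fun p hp => ?_⟩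
  set j := max N.2 M.1
  have h₁ := hN (p.1, j) ⟨hp.1, le_max_left _ _⟩
  have h₂ := hM (j, p.2) ⟨le_max_right _ _, hp.2⟩
  linarith [hX (x p.1) (z p.2) (y j) a, le_min h₁ h₂]

lemma seqEquiv_of_bpt_eq (hX : IsDeltaHyperbolic X δ) {a : X} {x y : ℕ → X}
    {hx : ConvSeq a x} {hy : ConvSeq a y} (h : bpt a x hx = bpt a y hy) : SeqEquiv a x y :=
  have hequiv : Equivalence fun u v : BSeq a => SeqEquiv a u.1 v.1 :=
    ⟨fun u => u.2, SeqEquiv.symm, SeqEquiv.trans hX⟩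
  hequiv.eqvGen_iff.1 (Quot.eq.1 h)

lemma gpBoundary_nonneg (a : X) (p q : Boundary a) : 0 ≤ gpBoundary a p q := by
  refine le_sInf ?_
  rintro e ⟨u, v, -, -, -, -, rfl⟩
  exact le_liminf_of_le (by isBoundedDefault)
    (Eventually.of_forall fun n => EReal.coe_nonneg.2 (gp_nonneg a (u n) (v n)))

lemma gpBoundary_le_liminf {a : X} {x y : ℕ → X} (hx : ConvSeq a x) (hy : ConvSeq a y) :
    gpBoundary a (bpt a x hx) (bpt a y hy) ≤ liminf (fun n => (gp a (x n) (y n) : EReal)) atTop :=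
  sInf_le ⟨x, y, hx, hy, rfl, rfl, rfl⟩

lemma le_gpBoundary (hX : IsDeltaHyperbolic X δ) {a : X} {x y : ℕ → X}
    (hx : ConvSeq a x) (hy : ConvSeq a y) {R : ℝ} (h : ∀ᶠ n in atTop, R ≤ gp a (x n) (y n)) :
    ((R - δ / 2 : ℝ) : EReal) ≤ gpBoundary a (bpt a x hx) (bpt a y hy) := by
  refine le_sInf ?_
  rintro e ⟨u, v, hu, hv, hux, hvy, rfl⟩
  have h₁ := tendsto_atTop.1 (seqEquiv_of_bpt_eq hX hux) R
  have h₂ := tendsto_atTop.1 (seqEquiv_of_bpt_eq hX hvy) R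
  obtain ⟨N, hN⟩ := eventually_atTop.1 h₁
  obtain ⟨M, hM⟩ := eventually_atTop.1 h₂
  obtain ⟨K, hK⟩ := eventually_atTop.1 h
  set k := max (max N.2 M.2) K
  refine le_liminf_of_le (by isBoundedDefault) ?_
  filter_upwards [eventually_ge_atTop (max N.1 M.1)] with i hi
  have hux : R ≤ gp a (u i) (x k) :=
    hN (i, k) ⟨le_of_max_le_left hi, (le_max_left _ _).trans (le_max_left _ _)⟩
  have hvy : R ≤ gp a (y k) (v i) := by
    rw [gp_comm]
    exact hM (i, k) ⟨le_of_max_le_right hi, (le_max_right _ _).trans (le_max_left _ _)⟩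
  have hxy : R ≤ gp a (x k) (y k) := hK k (le_max_right _ _)
  exact EReal.coe_le_coe_iff.2 <| by
    linarith [hX.min_three_sub_le a (u i) (x k) (y k) (v i), le_min hux (le_min hxy hvy)]

end BoundaryGromovProduct

section HolderTransfer

lemma negPow_nonneg {K : ℝ} (hK : 0 ≤ K) (e : EReal) : 0 ≤ negPow K e := by
  unfold negPow
  split_ifs
  exacts [le_rfl, le_rfl, Real.rpow_nonneg hK _]

lemma negPow_le_rpow_neg {K : ℝ} (hK : 1 ≤ K) {e : EReal} {T : ℝ} (hT : (T : EReal) ≤ e) :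
    negPow K e ≤ K ^ (-T) := by
  unfold negPow
  split_ifs with htop hbot
  · positivity
  · positivity
  · refine Real.rpow_le_rpow_of_exponent_le hK (neg_le_neg ?_)
    rwa [← EReal.coe_toReal htop hbot, EReal.coe_le_coe_iff] at hT

lemma coe_le_of_negPow_le {K : ℝ} (hK : 1 < K) {e : EReal} (he : e ≠ ⊥) {T : ℝ}
    (h : negPow K e ≤ K ^ (-T)) : (T : EReal) ≤ e := by
  by_cases htop : e = ⊤
  · exact htop ▸ le_top
  rw [negPow, if_neg htop, if_neg he] at h
  rw [← EReal.coe_toReal htop he, EReal.coe_le_coe_iff]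
  exact neg_le_neg_iff.1 ((Real.rpow_le_rpow_left_iff hK).1 h)

lemma mul_rpow_mul_rpow_neg {K K' : ℝ} (hK : 0 < K) (hK' : 1 < K') {c C : ℝ} (hc : 0 < c)
    (hC : 0 < C) (α T : ℝ) :
    c * (C * K ^ (-T)) ^ α = K' ^ (-(α * Real.logb K' K * T - Real.logb K' (c * C ^ α))) := by
  have hK'0 : 0 < K' := zero_lt_one.trans hK'
  rw [show -(α * Real.logb K' K * T - Real.logb K' (c * C ^ α)) =
      Real.logb K' (c * C ^ α) + Real.logb K' K * (-T * α) by ring,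
    Real.rpow_add hK'0, Real.rpow_mul hK'0.le, Real.rpow_logb hK'0 hK'.ne' (by positivity),
    Real.rpow_logb hK'0 hK'.ne' hK, Real.mul_rpow hC.le (by positivity), Real.rpow_mul hK.le]
  ring

lemma IsHolder.exists_le_gpBoundary {a : X} {b : Y}
    {dX : Boundary a → Boundary a → ℝ} {KX CX : ℝ} (hdX : IsVisualMetric a dX KX CX)
    {dY : Boundary b → Boundary b → ℝ} {KY CY : ℝ} (hdY : IsVisualMetric b dY KY CY)
    {g : Boundary a → Boundary b} (hg : IsHolder dX dY g) :
    ∃ β c : ℝ, 0 < β ∧ 0 ≤ c ∧ ∀ (p q : Boundary a) (T : ℝ),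
      (T : EReal) ≤ gpBoundary a p q → ((β * T - c : ℝ) : EReal) ≤ gpBoundary b (g p) (g q) := by
  obtain ⟨L, α, hL, hα, hHol⟩ := hg
  obtain ⟨hKX, hCX, hdX⟩ := hdX
  obtain ⟨hKY, hCY, hdY⟩ := hdY
  set c := Real.logb KY (CY * L * CX ^ α)
  refine ⟨α * Real.logb KY KX, max c 0, mul_pos hα (Real.logb_pos hKY hKX), le_max_right _ _,
    fun p q T hT => ?_⟩
  have hdX0 : 0 ≤ dX p q :=
    (div_nonneg (negPow_nonneg (by linarith) _) (by linarith)).trans (hdX p q).1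
  have hdXT : dX p q ≤ CX * KX ^ (-T) :=
    (hdX p q).2.trans (mul_le_mul_of_nonneg_left (negPow_le_rpow_neg hKX.le hT) (by linarith))
  have hdYT : negPow KY (gpBoundary b (g p) (g q)) ≤ KY ^ (-(α * Real.logb KY KX * T - c)) :=
    calc negPow KY (gpBoundary b (g p) (g q)) ≤ CY * dY (g p) (g q) := by
          have := (hdY (g p) (g q)).1
          rwa [div_le_iff₀ (by linarith), mul_comm] at this
      _ ≤ CY * (L * (CX * KX ^ (-T)) ^ α) :=
          mul_le_mul_of_nonneg_left ((hHol p q).trans (mul_le_mul_of_nonneg_left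
            (Real.rpow_le_rpow hdX0 hdXT hα.le) hL.le)) (by linarith)
      _ = _ := by
          rw [← mul_assoc, mul_rpow_mul_rpow_neg (by linarith) hKY (by positivity) (by linarith)]
  have hne : gpBoundary b (g p) (g q) ≠ ⊥ :=
    ne_bot_of_le_ne_bot EReal.zero_ne_bot (gpBoundary_nonneg b _ _)
  refine le_trans ?_ (coe_le_of_negPow_le hKY hne hdYT)
  exact EReal.coe_le_coe_iff.2 (by linarith [le_max_left c 0])

end HolderTransfer

section RadialFunctions

variable {a : X} {b : Y} {f : X → Y} {A : ℝ}

lemma isRadialWith_of_dist_eq (hA : 0 ≤ A) (hdist : ∀ z, dist (f z) b = A * dist z a)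
    {μ : ℝ} (hμ : 0 ≤ μ) : IsRadialWith f a A μ := by
  intro M _ γ hγ s hs t ht
  calc A * dist (γ s) (γ t) - μ ≤ |A * dist (γ s) a - A * dist (γ t) a| := by
        rw [hγ.2 s hs t ht, hγ.dist_origin hs, hγ.dist_origin ht, ← mul_sub, abs_mul,
          abs_of_nonneg hA]
        linarith
    _ ≤ dist (f (γ s)) (f (γ t)) := by
        rw [← hdist, ← hdist]; exact abs_dist_sub_le _ _ _

lemma isLSL_of_dist_eq_of_le_gp (hdist : ∀ z, dist (f z) b = A * dist z a) {c : ℝ}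
    (hgp : ∀ x y, A * gp a x y - c ≤ gp b (f x) (f y)) : IsLSL f A (2 * c) := by
  intro x y
  have := hgp x y
  unfold gp at this
  rw [hdist, hdist] at this
  linarith

lemma radial_of_dist_eq_of_le_gp (hA : 0 < A) (hdist : ∀ z, dist (f z) b = A * dist z a)
    {c : ℝ} (hgp : ∀ x y, A * gp a x y - c ≤ gp b (f x) (f y)) : Radial f a := by
  have hlsl := isLSL_of_dist_eq_of_le_gp hdist hgp
  have hc : 0 ≤ 2 * c := by simpa using hlsl a a
  exact ⟨⟨A, 2 * c + 1, hA, by linarith, fun x y => by linarith [hlsl x y]⟩,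
    A, 1, hA, one_pos, isRadialWith_of_dist_eq hA.le hdist zero_le_one⟩

end RadialFunctions

section RadialExtension

variable {δ : ℝ} {a : X} {b : Y} {g : Boundary a → Boundary b} {A D : ℝ} {f : X → Y}

lemma IsRadialExtension.exists_ray (hX : IsDeltaHyperbolic X δ) (hD : 0 ≤ D)
    (hf : IsRadialExtension a b g A D f) {x : X} (hx : x ≠ a) :
    ∃ (ξ : ℝ → X) (η : ℝ → Y) (p : Boundary a), RayRepresents a ξ p ∧ IsRay η b ∧
      RayRepresents b η (g p) ∧ f x = η (A * dist x a) ∧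
      ∀ᶠ n : ℕ in atTop, dist x a - D - δ / 4 ≤ gp a x (ξ n) := by
  obtain ⟨hray, hmax⟩ := hf.2 x hx
  by_cases hex : ∃ (ξ : ℝ → X) (t : ℝ), IsRay ξ a ∧ 0 ≤ t ∧ ξ t = x
  · obtain ⟨ξ, t, η, hξ, ht, rfl, hη, ⟨p, hp, hgp⟩, hfx⟩ := hray hex
    rw [hξ.dist_origin ht]
    refine ⟨ξ, η, p, hp, hη, hgp, hfx, ?_⟩
    filter_upwards [hξ.eventually_gp_eq ht] with n hn
    linarith [hX.nonneg a]
  · obtain ⟨M, t, ζ, ξ, η, ⟨hζ, -⟩, ht, rfl, -, hξ, hη, ⟨p, hp, hgp⟩, hfx⟩ := hmax hex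
    rw [hζ.dist_origin ⟨ht.1.trans ht.2, le_rfl⟩] at hξ
    rw [hζ.dist_origin ht]
    exact ⟨ξ, η, p, hp, hη, hgp, hfx, hζ.eventually_le_gp hX hD hξ ht⟩

lemma IsRadialExtension.dist_basepoint (hX : IsDeltaHyperbolic X δ) (hD : 0 ≤ D) (hA : 0 ≤ A)
    (hf : IsRadialExtension a b g A D f) (z : X) : dist (f z) b = A * dist z a := by
  by_cases hz : z = a
  · rw [hz, hf.1, dist_self, dist_self, mul_zero]
  · obtain ⟨-, η, -, -, hη, -, hfz, -⟩ := hf.exists_ray hX hD hz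
    rw [hfz, hη.dist_origin (by positivity)]

lemma IsRadialExtension.le_gp (hX : IsDeltaHyperbolic X δ) (hY : IsDeltaHyperbolic Y δ)
    (hD : 0 ≤ D) (hA : 0 ≤ A) (hf : IsRadialExtension a b g A D f) {β c : ℝ} (hAβ : A ≤ β)
    (hc : 0 ≤ c) (hg : ∀ (p q : Boundary a) (T : ℝ),
      (T : EReal) ≤ gpBoundary a p q → ((β * T - c : ℝ) : EReal) ≤ gpBoundary b (g p) (g q))
    (x y : X) : A * gp a x y - (β * (D + 3 * δ / 2) + c + δ / 2) ≤ gp b (f x) (f y) := by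
  have hδ := hX.nonneg a
  have hconst : 0 ≤ β * (D + 3 * δ / 2) + c + δ / 2 := by
    have := mul_nonneg (hA.trans hAβ) (show 0 ≤ D + 3 * δ / 2 by linarith)
    linarith
  by_cases hx : x = a
  · rw [hx, gp_basepoint_left, hf.1, gp_basepoint_left]; linarith
  by_cases hy : y = a
  · rw [hy, gp_comm, gp_basepoint_left, hf.1, gp_comm, gp_basepoint_left]; linarith
  obtain ⟨ξx, ηx, px, ⟨hξx, rfl⟩, hηx, ⟨hηx', hgx⟩, hfx, hx'⟩ := hf.exists_ray hX hD hx
  obtain ⟨ξy, ηy, py, ⟨hξy, rfl⟩, hηy, ⟨hηy', hgy⟩, hfy, hy'⟩ := hf.exists_ray hX hD hy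
  set G := gp a x y
  have hGx : G ≤ dist x a := gp_le_dist_left a x y
  have hGy : G ≤ dist y a := (gp_comm a x y).trans_le (gp_le_dist_left a y x)
  have hξ : ∀ᶠ n : ℕ in atTop, G - D - δ ≤ gp a (ξx n) (ξy n) := by
    filter_upwards [hx', hy'] with n h₁ h₂
    have := hX.min_three_sub_le a (ξx n) x y (ξy n)
    rw [gp_comm a (ξx n) x] at this
    linarith [le_min (show G - D - δ / 4 ≤ gp a x (ξx n) by linarith)
      (le_min (show G - D - δ / 4 ≤ G by linarith)
        (show G - D - δ / 4 ≤ gp a y (ξy n) by linarith))]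
  have hη := ((hg _ _ _ (le_gpBoundary hX hξx hξy hξ)).trans_eq (by rw [hgx, hgy])).trans
    (gpBoundary_le_liminf hηx' hηy')
  have := hηx.min_sub_le_gp hY hηy (s := A * dist x a) (t := A * dist y a) (by positivity)
    (by positivity) hη
  rw [hfx, hfy]
  have hAG := mul_le_mul_of_nonneg_right hAβ (gp_nonneg a x y)
  have : A * G - (β * (D + 3 * δ / 2) + c) ≤
      min (min (A * dist x a) (A * dist y a)) (β * (G - D - δ - δ / 2) - c) :=
    le_min (le_min (by nlinarith [mul_le_mul_of_nonneg_left hGx hA])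
      (by nlinarith [mul_le_mul_of_nonneg_left hGy hA])) (by linarith)
  linarith

end RadialExtension

theorem stmt6_general {X : Type*} [MetricSpace X]
    {Y : Type*} [MetricSpace Y]
    (δ : ℝ) (hX : IsDeltaHyperbolic X δ) (hY : IsDeltaHyperbolic Y δ)
    (a : X) (b : Y) (D : ℝ) (hD : 0 < D)
    (dX : Boundary a → Boundary a → ℝ) (KX CX : ℝ) (hdX : IsVisualMetric a dX KX CX)
    (dY : Boundary b → Boundary b → ℝ) (KY CY : ℝ) (hdY : IsVisualMetric b dY KY CY)
    (g : Boundary a → Boundary b) (hg : IsHolder dX dY g) :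
    ∃ M : ℝ, 0 < M ∧ ∀ A : ℝ, 0 < A → A ≤ M → ∀ f : X → Y,
      IsRadialExtension a b g A D f → Radial f a := by
  obtain ⟨β, c, hβ, hc, hgβ⟩ := hg.exists_le_gpBoundary hdX hdY
  refine ⟨β, hβ, fun A hA hAβ f hf => ?_⟩
  exact radial_of_dist_eq_of_le_gp hA (hf.dist_basepoint hX hD.le hA.le)
    (hf.le_gp hX hY hD.le hA.le hAβ hc hgβ)

/-- if `g : ∂X → ∂Y` is Hölder and `X` is visual, then there is
`M > 0` such that each radial extension of `g` with parameter `A ≤ M` is a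
radial function. -/
theorem stmt6 {X : Type*} [MetricSpace X] [ProperSpace X]
    {Y : Type*} [MetricSpace Y] [ProperSpace Y]
    (δ : ℝ) (hX : IsDeltaHyperbolic X δ) (hY : IsDeltaHyperbolic Y δ)
    (hgX : IsGeodesicSpace X) (hgY : IsGeodesicSpace Y)
    (a : X) (b : Y) (D : ℝ) (hD : 0 < D) (hvisX : IsVisualSpace a D)
    (dX : Boundary a → Boundary a → ℝ) (KX CX : ℝ) (hdX : IsVisualMetric a dX KX CX)
    (dY : Boundary b → Boundary b → ℝ) (KY CY : ℝ) (hdY : IsVisualMetric b dY KY CY)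
    (g : Boundary a → Boundary b) (hg : IsHolder dX dY g) :
    ∃ M : ℝ, 0 < M ∧ ∀ A : ℝ, 0 < A → A ≤ M → ∀ f : X → Y,
      IsRadialExtension a b g A D f → Radial f a :=
  stmt6_general δ hX hY a b D hD dX KX CX hdX dY KY CY hdY g hg

end Gromov
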